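/- arXiv:1911.04682 — 6 statements merged into one kernel-verified Lean document; each statement's English description precedes it below -/
import Mathlib

section
/- Let $Q$ be a positive definite $N\times N$ matrix ($N\geq 3$) whose spectrum is invariant under inversion $\lambda \mapsto \lambda^{-1}$ and with $Q \neq I$. Let $d_1 = \mathrm{Tr}(Q)$ and $\lambda_N = \|Q\|$ the largest eigenvalue. Then $d_1^2 < 4 + (N^2-4)\lambda_N^2$. -/
open scoped Matrix.Norms.L2Operator ComplexOrder MatrixOrder

/-!
The largest eigenvalue of `Q` is `L = ‖Q‖`. As the spectrum is positive and closed under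
inversion, `L ≤ 1` would force every eigenvalue to be `1`, i.e. `Q = 1`; so `L > 1`, and `L⁻¹` is
also an eigenvalue. Bounding that eigenvalue by `L⁻¹` and the other `N - 1` by `L` gives
`Tr Q ≤ L⁻¹ + (N - 1) L`, and `(L⁻¹ + (N - 1) L)² < 4 + (N² - 4) L²` because `L⁻² < 1 < L²`.
-/

lemma spectrum.forall_inv_mem_real_of_forall_inv_mem {A : Type*} [Ring A] [Algebra ℂ A]
    {a : A} (h : ∀ l ∈ spectrum ℂ a, l⁻¹ ∈ spectrum ℂ a) :
    ∀ x ∈ spectrum ℝ a, x⁻¹ ∈ spectrum ℝ a := by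
  intro x hx
  rw [← spectrum.algebraMap_mem_iff ℂ] at hx ⊢
  simpa using h _ hx

namespace CStarAlgebra

variable {A : Type*} [CStarAlgebra A] [PartialOrder A] [StarOrderedRing A] {a : A}

lemma one_lt_norm_of_forall_inv_mem_spectrum (ha : IsStrictlyPositive a)
    (hinv : ∀ x ∈ spectrum ℝ a, x⁻¹ ∈ spectrum ℝ a) (hne : a ≠ 1) : 1 < ‖a‖ := by
  have := nontrivial_of_ne a 1 hne
  by_contra! hle
  have hle_one : ∀ x ∈ spectrum ℝ a, x ≤ 1 := fun x hx =>
    (Real.le_norm_self x).trans ((spectrum.norm_le_norm_of_mem hx).trans hle)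
  refine hne (CFC.eq_one_of_spectrum_subset_one (R := ℝ) a (fun x hx => ?_) ha.isSelfAdjoint)
  have hx₀ : 0 < x := ha.spectrum_pos hx
  have hx_inv : x⁻¹ ≤ 1 := hle_one _ (hinv x hx)
  exact le_antisymm (hle_one x hx) (by rwa [inv_le_one₀ hx₀] at hx_inv)

end CStarAlgebra

lemma Finset.sum_le_add_card_sub_one_mul {ι : Type*} [Fintype ι] {e : ι → ℝ} {L m : ℝ}
    (hle : ∀ i, e i ≤ L) {i₀ : ι} (hi₀ : e i₀ = m) :
    ∑ i, e i ≤ m + (Fintype.card ι - 1) * L := by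
  classical
  rw [← Finset.add_sum_erase _ _ (Finset.mem_univ i₀), hi₀]
  have hrest := Finset.sum_le_card_nsmul (univ.erase i₀) e L fun i _ => hle i
  rw [Finset.card_erase_of_mem (Finset.mem_univ _), Finset.card_univ, nsmul_eq_mul,
    Nat.cast_pred (Fintype.card_pos_iff.mpr ⟨i₀⟩)] at hrest
  linarith

lemma sq_inv_add_mul_lt {n L : ℝ} (hn : 5 ≤ 2 * n) (hL : 1 < L) :
    (L⁻¹ + (n - 1) * L) ^ 2 < 4 + (n ^ 2 - 4) * L ^ 2 := by
  have hL₀ : 0 < L := by linarith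
  have hinv_sq : L⁻¹ ^ 2 < 1 := pow_lt_one₀ (by positivity) (inv_lt_one_of_one_lt₀ hL) two_ne_zero
  have hexpand : (L⁻¹ + (n - 1) * L) ^ 2 = L⁻¹ ^ 2 + 2 * (n - 1) + (n - 1) ^ 2 * L ^ 2 := by
    field_simp
    ring
  nlinarith [mul_nonneg (by linarith : (0 : ℝ) ≤ 2 * n - 5) (by nlinarith : (0 : ℝ) ≤ L ^ 2 - 1)]

lemma Matrix.IsHermitian.re_trace_eq_sum_eigenvalues {n : Type*} [Fintype n] [DecidableEq n]
    {Q : Matrix n n ℂ} (hQ : Q.IsHermitian) : Q.trace.re = ∑ i, hQ.eigenvalues i := by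
  simp [hQ.trace_eq_sum_eigenvalues]

/-- If `Q` is positive definite `N×N` (`N ≥ 3`), with spectrum invariant under inversion and
`Q ≠ I`, then `(Tr Q)² < 4 + (N² - 4) ‖Q‖²`. -/
theorem stmt2 (N : ℕ) (hN : 3 ≤ N) (Q : Matrix (Fin N) (Fin N) ℂ) (hQ : Q.PosDef)
    (hsym : ∀ l : ℂ, l ∈ spectrum ℂ Q → l⁻¹ ∈ spectrum ℂ Q)
    (hQne : Q ≠ 1) :
    Q.trace.re ^ 2 < 4 + ((N : ℝ) ^ 2 - 4) * ‖Q‖ ^ 2 := by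
  have := nontrivial_of_ne Q 1 hQne
  have hpos : IsStrictlyPositive Q := Matrix.isStrictlyPositive_iff_posDef.mpr hQ
  have hinv := spectrum.forall_inv_mem_real_of_forall_inv_mem hsym
  have hle : ∀ i, hQ.1.eigenvalues i ≤ ‖Q‖ := fun i => (Real.le_norm_self _).trans
    (spectrum.norm_le_norm_of_mem (hQ.1.eigenvalues_mem_spectrum_real i))
  obtain ⟨i₀, hi₀⟩ : ‖Q‖⁻¹ ∈ Set.range hQ.1.eigenvalues := by
    rw [← hQ.1.spectrum_real_eq_range_eigenvalues]
    exact hinv _ (CStarAlgebra.norm_mem_spectrum_of_nonneg hpos.nonneg)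
  have htrace : Q.trace.re ≤ ‖Q‖⁻¹ + (N - 1) * ‖Q‖ := by
    simpa [hQ.1.re_trace_eq_sum_eigenvalues] using Finset.sum_le_add_card_sub_one_mul hle hi₀
  have htrace_nonneg : 0 ≤ Q.trace.re := Complex.nonneg_iff.mp hQ.posSemidef.trace_nonneg |>.1
  calc Q.trace.re ^ 2 ≤ (‖Q‖⁻¹ + (N - 1) * ‖Q‖) ^ 2 := pow_le_pow_left₀ htrace_nonneg htrace 2
    _ < 4 + ((N : ℝ) ^ 2 - 4) * ‖Q‖ ^ 2 := sq_inv_add_mul_lt (by norm_cast; omega)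
        (CStarAlgebra.one_lt_norm_of_forall_inv_mem_spectrum hpos hinv hQne)
end

section
/- Define $f(t) = (t + \sqrt{t^2-4})/2$ for $t \geq 2$. Let $N \geq 3$, and let $Q$ be a positive definite $N\times N$ matrix with inversion-symmetric spectrum, $Q \neq I$, and $d_1 := \mathrm{Tr}(Q) \geq 2$. Then $f(d_1) < f(N)\|Q\|$. -/
open scoped Matrix.Norms.L2Operator ComplexOrder

/-!
Let `λ` be the largest eigenvalue of `Q`. Since the spectrum is closed under inversion, `λ⁻¹` is
an eigenvalue too, and `λ > 1` because `Q ≠ I`. Bounding the other `N - 1` eigenvalues by `λ`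
gives `d₁ ≤ (N - 1) λ + λ⁻¹`, whence `d₁ < N λ` and `d₁² - 4 < (N² - 4) λ²`. Adding the two,
`f(d₁) < f(N) λ ≤ f(N) ‖Q‖`.
-/

lemma sum_le_card_sub_one_mul_add {ι : Type*} [Fintype ι] (v : ι → ℝ) {M : ℝ}
    (hv : ∀ i, v i ≤ M) (k : ι) : ∑ i, v i ≤ (Fintype.card ι - 1) * M + v k := by
  classical
  have hrest : ∑ i ∈ Finset.univ.erase k, v i ≤ (Fintype.card ι - 1 : ℕ) * M := by
    simpa [Finset.card_erase_of_mem] using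
      Finset.sum_le_card_nsmul (Finset.univ.erase k) v M fun i _ => hv i
  have hcard : ((Fintype.card ι - 1 : ℕ) : ℝ) = Fintype.card ι - 1 := by
    have : 1 ≤ Fintype.card ι := Fintype.card_pos_iff.mpr ⟨k⟩
    push_cast [this]
    ring
  rw [← Finset.add_sum_erase _ _ (Finset.mem_univ k)]
  linarith [hcard ▸ hrest]

lemma one_lt_of_forall_exists_eq_inv {ι : Type*} {v : ι → ℝ} (hpos : ∀ i, 0 < v i)
    (hinv : ∀ i, ∃ k, v k = (v i)⁻¹) {i₀ : ι} (hmax : ∀ i, v i ≤ v i₀) {j : ι} (hj : v j ≠ 1) :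
    1 < v i₀ := by
  rcases hj.lt_or_gt with hlt | hgt
  · obtain ⟨k, hk⟩ := hinv j
    have : 1 < v k := hk ▸ (one_lt_inv₀ (hpos j)).mpr hlt
    exact this.trans_le (hmax k)
  · exact hgt.trans_le (hmax j)

lemma lt_mul_and_sq_sub_four_lt {n l d : ℝ} (hn : 3 ≤ n) (hl : 1 < l) (hd : 0 ≤ d)
    (hdl : d ≤ (n - 1) * l + l⁻¹) : d < n * l ∧ d ^ 2 - 4 < (n ^ 2 - 4) * l ^ 2 := by
  have hl0 : 0 < l := by linarith
  have hinv : l⁻¹ < 1 := inv_lt_one_of_one_lt₀ hl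
  have hinv0 : 0 < l⁻¹ := inv_pos.mpr hl0
  have hmul : l * l⁻¹ = 1 := mul_inv_cancel₀ hl0.ne'
  refine ⟨by nlinarith, ?_⟩
  -- `(n² - 4) l² - ((n - 1) l + l⁻¹)² + 4 = (2n - 5)(l² - 1) + (1 - l⁻²)`
  have hsq : d ^ 2 ≤ ((n - 1) * l + l⁻¹) ^ 2 := pow_le_pow_left₀ hd hdl 2
  have hexp : ((n - 1) * l + l⁻¹) ^ 2 = (n - 1) ^ 2 * l ^ 2 + 2 * (n - 1) + l⁻¹ ^ 2 := by
    linear_combination 2 * (n - 1) * hmul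
  have hpos : 0 ≤ (2 * n - 5) * (l ^ 2 - 1) := mul_nonneg (by linarith) (by nlinarith)
  nlinarith

lemma add_sqrt_sq_sub_four_lt {n l d : ℝ} (hn : 3 ≤ n) (hl : 1 < l) (hd : 2 ≤ d)
    (hdl : d ≤ (n - 1) * l + l⁻¹) : d + √(d ^ 2 - 4) < (n + √(n ^ 2 - 4)) * l := by
  obtain ⟨hlin, hsq⟩ := lt_mul_and_sq_sub_four_lt hn hl (by linarith) hdl
  have hroot : √(d ^ 2 - 4) < √(n ^ 2 - 4) * l := by
    rw [← Real.sqrt_sq (by linarith : 0 ≤ l), ← Real.sqrt_mul (by nlinarith)]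
    exact Real.sqrt_lt_sqrt (by nlinarith) hsq
  linarith

namespace Matrix.IsHermitian

variable {𝕜 n : Type*} [RCLike 𝕜] [Fintype n] [DecidableEq n] {A : Matrix n n 𝕜}

lemma ofReal_eigenvalues_mem_spectrum (hA : A.IsHermitian) (i : n) :
    (hA.eigenvalues i : 𝕜) ∈ spectrum 𝕜 A := by
  rw [hA.spectrum_eq_image_range]
  exact ⟨_, Set.mem_range_self i, rfl⟩

lemma exists_eigenvalues_eq_of_mem_spectrum (hA : A.IsHermitian) {z : 𝕜}
    (hz : z ∈ spectrum 𝕜 A) : ∃ i, (hA.eigenvalues i : 𝕜) = z := by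
  rw [hA.spectrum_eq_image_range] at hz
  obtain ⟨_, ⟨i, rfl⟩, rfl⟩ := hz
  exact ⟨i, rfl⟩

lemma exists_eigenvalues_eq_inv (hA : A.IsHermitian)
    (hsym : ∀ z ∈ spectrum 𝕜 A, z⁻¹ ∈ spectrum 𝕜 A) (i : n) :
    ∃ k, hA.eigenvalues k = (hA.eigenvalues i)⁻¹ := by
  obtain ⟨k, hk⟩ :=
    hA.exists_eigenvalues_eq_of_mem_spectrum (hsym _ (hA.ofReal_eigenvalues_mem_spectrum i))
  exact ⟨k, by exact_mod_cast hk⟩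

lemma exists_eigenvalues_ne_one (hA : A.IsHermitian) (hA1 : A ≠ 1) :
    ∃ i, hA.eigenvalues i ≠ 1 := by
  by_contra! h
  refine hA1 (CFC.eq_one_of_spectrum_subset_one (R := ℝ) A ?_ hA)
  rw [hA.spectrum_real_eq_range_eigenvalues]
  rintro _ ⟨i, rfl⟩
  exact h i

lemma eigenvalues_le_norm (hA : A.IsHermitian) (i : n) : hA.eigenvalues i ≤ ‖A‖ := by
  have : Nonempty n := ⟨i⟩
  have hnorm := spectrum.norm_le_norm_of_mem (hA.ofReal_eigenvalues_mem_spectrum i)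
  rw [RCLike.norm_ofReal] at hnorm
  exact (le_abs_self _).trans hnorm

end Matrix.IsHermitian

/-- With `f(t) = (t + √(t²-4))/2`, if `Q` is positive definite `N×N` (`N ≥ 3`) with
inversion-symmetric spectrum, `Q ≠ I` and `d₁ = Tr Q ≥ 2`, then `f(d₁) < f(N) ‖Q‖`. -/
theorem stmt3 (f : ℝ → ℝ) (hf : ∀ t : ℝ, 2 ≤ t → f t = (t + Real.sqrt (t ^ 2 - 4)) / 2)
    (N : ℕ) (hN : 3 ≤ N) (Q : Matrix (Fin N) (Fin N) ℂ) (hQ : Q.PosDef)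
    (hsym : ∀ l : ℂ, l ∈ spectrum ℂ Q → l⁻¹ ∈ spectrum ℂ Q)
    (hQne : Q ≠ 1) (hd : 2 ≤ Q.trace.re) :
    f Q.trace.re < f N * ‖Q‖ := by
  have hH := hQ.isHermitian
  have : Nonempty (Fin N) := ⟨⟨0, by omega⟩⟩
  obtain ⟨i₀, hmax⟩ := Finite.exists_max hH.eigenvalues
  obtain ⟨k, hk⟩ := hH.exists_eigenvalues_eq_inv hsym i₀
  obtain ⟨j, hj⟩ := hH.exists_eigenvalues_ne_one hQne
  have hl : 1 < hH.eigenvalues i₀ :=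
    one_lt_of_forall_exists_eq_inv hQ.eigenvalues_pos (hH.exists_eigenvalues_eq_inv hsym) hmax hj
  have htrace : Q.trace.re ≤ (N - 1) * hH.eigenvalues i₀ + (hH.eigenvalues i₀)⁻¹ := by
    rw [hH.trace_eq_sum_eigenvalues, ← hk]
    simpa using sum_le_card_sub_one_mul_add hH.eigenvalues hmax k
  have hN' : (3 : ℝ) ≤ N := by exact_mod_cast hN
  rw [hf _ hd, hf _ (by linarith)]
  calc (Q.trace.re + √(Q.trace.re ^ 2 - 4)) / 2
      < (N + √((N : ℝ) ^ 2 - 4)) / 2 * hH.eigenvalues i₀ := by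
        linarith [add_sqrt_sq_sub_four_lt hN' hl hd htrace]
    _ ≤ (N + √((N : ℝ) ^ 2 - 4)) / 2 * ‖Q‖ :=
        mul_le_mul_of_nonneg_left (hH.eigenvalues_le_norm i₀) (by positivity)
end

section
/- Let $N \geq 3$ and let $Q$ be a positive definite $N\times N$ matrix with inversion-symmetric spectrum and $Q \neq I$, with $d_1 = \mathrm{Tr}(Q) \geq 2$. Define sequences $(n_k)$ and $(d_k)$ by $n_0 = 1$, $n_1 = N$, $N n_{k+1} = n_{k+2} + n_k$ and $d_0 = 1$, $d_1 = \mathrm{Tr}(Q)$, $d_1 d_{k+1} = d_{k+2} + d_k$. Then $\liminf_{k\to\infty} \left(\frac{n_k \|Q\|^k}{d_k}\right)^{1/k} > 1$; in particular $n_k\|Q\|^k/d_k$ grows exponentially. -/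
open scoped Matrix.Norms.L2Operator ComplexOrder
open Filter Topology


private lemma auxRoot {s : ℝ} (hs : 2 ≤ s) :
    ∃ x : ℝ, 1 ≤ x ∧ x + 1/x = s := by
  have h4 : (0:ℝ) ≤ s^2 - 4 := by nlinarith
  set r := Real.sqrt (s^2 - 4) with hr
  have hr2 : r^2 = s^2 - 4 := Real.sq_sqrt h4
  have hr0 : 0 ≤ r := Real.sqrt_nonneg _
  have hx1 : (1:ℝ) ≤ (s + r)/2 := by nlinarith
  have hx0 : (0:ℝ) < (s + r)/2 := by linarith
  refine ⟨(s + r)/2, hx1, ?_⟩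
  field_simp
  nlinarith

private lemma auxMono {x y : ℝ} (hx : 1 ≤ x) (hxy : x ≤ y) : x + 1/x ≤ y + 1/y := by
  have hx0 : (0:ℝ) < x := by linarith
  have hy0 : (0:ℝ) < y := by linarith
  have h1 : 1/x - 1/y = (y - x)/(x*y) := by field_simp
  have h2 : (y - x)/(x*y) ≤ (y - x) := by
    apply div_le_self (by linarith)
    nlinarith
  linarith

private lemma auxLim : Tendsto (fun k : ℕ => ((k:ℝ)+1) ^ ((1:ℝ)/(k:ℝ))) atTop (𝓝 1) := by
  have h0 : Tendsto (fun x : ℝ => Real.log x / x) atTop (𝓝 0) :=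
    Real.isLittleO_log_id_atTop.tendsto_div_nhds_zero
  have h1 : Tendsto (fun k : ℕ => ((k:ℝ)+1)) atTop atTop :=
    tendsto_atTop_add_const_right _ _ tendsto_natCast_atTop_atTop
  have h2 : Tendsto (fun k : ℕ => Real.log ((k:ℝ)+1) / ((k:ℝ)+1)) atTop (𝓝 0) := h0.comp h1
  have h3 : Tendsto (fun k : ℕ => ((k:ℝ)+1)/(k:ℝ)) atTop (𝓝 1) := by
    have h4 : Tendsto (fun k:ℕ => 1 + 1/(k:ℝ)) atTop (𝓝 (1+0)) :=
      tendsto_const_nhds.add tendsto_one_div_atTop_nhds_zero_nat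
    rw [add_zero] at h4
    apply h4.congr'
    filter_upwards [eventually_ge_atTop 1] with k hk
    have hk0 : (k:ℝ) ≠ 0 := Nat.cast_ne_zero.mpr (by omega)
    field_simp
  have h5 : Tendsto (fun k : ℕ => Real.log ((k:ℝ)+1) / (k:ℝ)) atTop (𝓝 0) := by
    have h6 := h2.mul h3
    rw [zero_mul] at h6
    apply h6.congr'
    filter_upwards [eventually_ge_atTop 1] with k hk
    have hk0 : (k:ℝ) ≠ 0 := Nat.cast_ne_zero.mpr (by omega)
    have hk1 : (k:ℝ) + 1 ≠ 0 := by positivity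
    field_simp
  have h7 := (Real.continuous_exp.tendsto 0).comp h5
  rw [Real.exp_zero] at h7
  apply h7.congr
  intro k
  rw [Function.comp_apply, Real.rpow_def_of_pos (by positivity), mul_one_div]

private lemma auxLiminf (a b L : ℝ) (ha : 1 < a) (hb : 1 ≤ b) (hL : 0 < L) (hkey : b < a * L)
    (n d : ℕ → ℝ) (hn0 : n 0 = 1) (hd0 : d 0 = 1) (hd1 : d 1 = b + 1/b)
    (hnrec : ∀ k : ℕ, (a + 1/a) * n (k+1) = n (k+2) + n k)
    (hdrec : ∀ k : ℕ, (b + 1/b) * d (k+1) = d (k+2) + d k)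
    (hn1' : a * n 0 ≤ n 1) (hn1'' : n 1 ≤ a * n 0 + a^1) :
    1 < Filter.liminf (fun k : ℕ => (n k * L^k / d k) ^ ((1:ℝ)/(k:ℕ))) atTop := by
  have ha0 : (0:ℝ) < a := by linarith
  have hb0 : (0:ℝ) < b := by linarith
  -- lower geometric bounds
  have hnstep : ∀ k, a * n k ≤ n (k+1) := by
    intro k
    induction k with
    | zero => exact hn1'
    | succ k ih =>
      have h' : a * n (k+1) + (1/a) * n (k+1) = n (k+2) + n k := by
        rw [← add_mul]; exact hnrec k
      have h2 : (1/a) * (a * n k) ≤ (1/a) * n (k+1) :=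
        mul_le_mul_of_nonneg_left ih (by positivity)
      rw [← mul_assoc, one_div_mul_cancel (ne_of_gt ha0), one_mul] at h2
      linarith
  have hdstep : ∀ k, b * d k ≤ d (k+1) := by
    intro k
    induction k with
    | zero =>
      rw [hd0, hd1, mul_one]
      have : 0 < 1/b := by positivity
      linarith
    | succ k ih =>
      have h' : b * d (k+1) + (1/b) * d (k+1) = d (k+2) + d k := by
        rw [← add_mul]; exact hdrec k
      have h2 : (1/b) * (b * d k) ≤ (1/b) * d (k+1) :=
        mul_le_mul_of_nonneg_left ih (by positivity)
      rw [← mul_assoc, one_div_mul_cancel (ne_of_gt hb0), one_mul] at h2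
      linarith
  have hnlow : ∀ k, a^k ≤ n k := by
    intro k
    induction k with
    | zero => simp [hn0]
    | succ k ih =>
      calc a^(k+1) = a * a^k := by ring
        _ ≤ a * n k := mul_le_mul_of_nonneg_left ih ha0.le
        _ ≤ n (k+1) := hnstep k
  have hdlow : ∀ k, b^k ≤ d k := by
    intro k
    induction k with
    | zero => simp [hd0]
    | succ k ih =>
      calc b^(k+1) = b * b^k := by ring
        _ ≤ b * d k := mul_le_mul_of_nonneg_left ih hb0.le
        _ ≤ d (k+1) := hdstep k
  have hnpos : ∀ k, 0 < n k := fun k => lt_of_lt_of_le (pow_pos ha0 k) (hnlow k)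
  have hdpos : ∀ k, 0 < d k := fun k => lt_of_lt_of_le (pow_pos (by linarith) k) (hdlow k)
  -- upper bounds
  have hnstep2 : ∀ k, n (k+1) ≤ a * n k + a^(k+1) := by
    intro k
    induction k with
    | zero => exact hn1''
    | succ k ih =>
      have h' : a * n (k+1) + (1/a) * n (k+1) = n (k+2) + n k := by
        rw [← add_mul]; exact hnrec k
      have h2 : (1/a) * n (k+1) ≤ (1/a) * (a * n k + a^(k+1)) :=
        mul_le_mul_of_nonneg_left ih (by positivity)
      have h3 : (1/a) * (a * n k + a^(k+1)) = n k + a^k := by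
        field_simp
        ring
      rw [h3] at h2
      have h4 : a^k ≤ a^(k+2) := pow_le_pow_right₀ ha.le (by omega)
      linarith
  have hdstep2 : ∀ k, d (k+1) ≤ b * d k + b^(k+1) := by
    intro k
    induction k with
    | zero =>
      rw [hd0, hd1, mul_one, pow_one]
      have h1 : 1/b ≤ 1 := by rw [div_le_one hb0]; exact hb
      linarith
    | succ k ih =>
      have h' : b * d (k+1) + (1/b) * d (k+1) = d (k+2) + d k := by
        rw [← add_mul]; exact hdrec k
      have h2 : (1/b) * d (k+1) ≤ (1/b) * (b * d k + b^(k+1)) :=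
        mul_le_mul_of_nonneg_left ih (by positivity)
      have h3 : (1/b) * (b * d k + b^(k+1)) = d k + b^k := by
        field_simp
        ring
      rw [h3] at h2
      have h4 : b^k ≤ b^(k+2) := pow_le_pow_right₀ hb (by omega)
      linarith
  have hnup : ∀ k, n k ≤ ((k:ℝ)+1) * a^k := by
    intro k
    induction k with
    | zero => simp [hn0]
    | succ k ih =>
      have h1 := hnstep2 k
      have h2 : a * n k ≤ a * (((k:ℝ)+1) * a^k) := mul_le_mul_of_nonneg_left ih ha0.le
      have h3 : a * (((k:ℝ)+1) * a^k) = ((k:ℝ)+1) * a^(k+1) := by ring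
      push_cast
      linarith
  have hdup : ∀ k, d k ≤ ((k:ℝ)+1) * b^k := by
    intro k
    induction k with
    | zero => simp [hd0]
    | succ k ih =>
      have h1 := hdstep2 k
      have h2 : b * d k ≤ b * (((k:ℝ)+1) * b^k) := mul_le_mul_of_nonneg_left ih hb0.le
      have h3 : b * (((k:ℝ)+1) * b^k) = ((k:ℝ)+1) * b^(k+1) := by ring
      push_cast
      linarith
  -- main estimate
  set ρ : ℝ := a * L / b with hρdef
  have hρ : 1 < ρ := (one_lt_div hb0).mpr hkey
  have hρ0 : 0 < ρ := by linarith
  set c : ℝ := (1 + ρ)/2 with hcdef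
  have hc1 : 1 < c := by rw [hcdef]; linarith
  have hcρ : c < ρ := by rw [hcdef]; linarith
  have hc0 : 0 < c := by linarith
  have hev1 : ∀ᶠ k : ℕ in atTop, c ≤ (n k * L^k / d k) ^ ((1:ℝ)/(k:ℕ)) := by
    have hA : ∀ᶠ k : ℕ in atTop, ((k:ℝ)+1) ^ ((1:ℝ)/(k:ℝ)) < ρ/c :=
      auxLim.eventually_lt_const ((one_lt_div hc0).mpr hcρ)
    filter_upwards [hA, eventually_ge_atTop 1] with k hk hk1
    have hk0 : (0:ℝ) < (k:ℝ) := by exact_mod_cast Nat.pos_of_ne_zero (by omega)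
    have hb1 : (a*L)^k / (((k:ℝ)+1) * b^k) ≤ n k * L^k / d k := by
      refine div_le_div₀ (mul_nonneg (hnpos k).le (by positivity)) ?_ (hdpos k) (hdup k)
      rw [mul_pow]
      exact mul_le_mul_of_nonneg_right (hnlow k) (by positivity)
    have heq : (a*L)^k / (((k:ℝ)+1) * b^k) = ρ^k / ((k:ℝ)+1) := by
      rw [hρdef, div_pow]
      field_simp
    rw [heq] at hb1
    have h2 : (ρ^k/((k:ℝ)+1)) ^ ((1:ℝ)/(k:ℝ)) ≤ (n k * L^k / d k) ^ ((1:ℝ)/(k:ℝ)) :=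
      Real.rpow_le_rpow (by positivity) hb1 (by positivity)
    have h3 : (ρ^k/((k:ℝ)+1)) ^ ((1:ℝ)/(k:ℝ)) = ρ / (((k:ℝ)+1) ^ ((1:ℝ)/(k:ℝ))) := by
      rw [Real.div_rpow (by positivity) (by positivity), ← Real.rpow_natCast ρ k,
        ← Real.rpow_mul hρ0.le, mul_one_div, div_self (ne_of_gt hk0), Real.rpow_one]
    have h4 : c ≤ ρ / (((k:ℝ)+1) ^ ((1:ℝ)/(k:ℝ))) := by
      rw [le_div_iff₀ (by positivity)]
      have h5 := (lt_div_iff₀ hc0).mp hk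
      linarith [h5]
    calc c ≤ ρ / (((k:ℝ)+1) ^ ((1:ℝ)/(k:ℝ))) := h4
      _ = (ρ^k/((k:ℝ)+1)) ^ ((1:ℝ)/(k:ℝ)) := h3.symm
      _ ≤ (n k * L^k / d k) ^ ((1:ℝ)/(k:ℝ)) := h2
  have hev2 : ∀ᶠ k : ℕ in atTop, (n k * L^k / d k) ^ ((1:ℝ)/(k:ℕ)) ≤ 2*ρ := by
    have hA : ∀ᶠ k : ℕ in atTop, ((k:ℝ)+1) ^ ((1:ℝ)/(k:ℝ)) < 2 :=
      auxLim.eventually_lt_const one_lt_two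
    filter_upwards [hA, eventually_ge_atTop 1] with k hk hk1
    have hk0 : (0:ℝ) < (k:ℝ) := by exact_mod_cast Nat.pos_of_ne_zero (by omega)
    have hb1 : n k * L^k / d k ≤ (((k:ℝ)+1) * (a*L)^k) / b^k := by
      refine div_le_div₀ (by positivity) ?_ (pow_pos hb0 k) (hdlow k)
      rw [mul_pow, ← mul_assoc]
      exact mul_le_mul_of_nonneg_right (hnup k) (by positivity)
    have heq : (((k:ℝ)+1) * (a*L)^k) / b^k = ((k:ℝ)+1) * ρ^k := by
      rw [hρdef, div_pow]
      field_simp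
    rw [heq] at hb1
    calc (n k * L^k / d k) ^ ((1:ℝ)/(k:ℝ))
        ≤ (((k:ℝ)+1) * ρ^k) ^ ((1:ℝ)/(k:ℝ)) :=
          Real.rpow_le_rpow (div_nonneg (mul_nonneg (hnpos k).le (by positivity)) (hdpos k).le)
            hb1 (by positivity)
      _ = ((k:ℝ)+1) ^ ((1:ℝ)/(k:ℝ)) * ρ := by
          rw [Real.mul_rpow (by positivity) (by positivity), ← Real.rpow_natCast ρ k,
            ← Real.rpow_mul hρ0.le, mul_one_div, div_self (ne_of_gt hk0), Real.rpow_one]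
      _ ≤ 2 * ρ := by nlinarith [hk, hρ0]
  have hcob : IsCoboundedUnder (· ≥ ·) atTop (fun k : ℕ => (n k * L^k / d k) ^ ((1:ℝ)/(k:ℕ))) :=
    isCoboundedUnder_ge_of_eventually_le atTop hev2
  calc (1:ℝ) < c := hc1
    _ ≤ _ := le_liminf_of_le hcob hev1

/-- For `Q` positive definite `N×N` (`N ≥ 3`) with inversion-symmetric spectrum, `Q ≠ I`,
`d₁ = Tr Q ≥ 2`, and the recursively defined sequences `n_k`, `d_k`, one has
`liminf (n_k ‖Q‖^k / d_k)^(1/k) > 1`. -/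
theorem stmt4 (N : ℕ) (hN : 3 ≤ N) (Q : Matrix (Fin N) (Fin N) ℂ) (hQ : Q.PosDef)
    (hsym : ∀ l : ℂ, l ∈ spectrum ℂ Q → l⁻¹ ∈ spectrum ℂ Q)
    (hQne : Q ≠ 1) (hd1 : 2 ≤ Q.trace.re)
    (n d : ℕ → ℝ)
    (hn0 : n 0 = 1) (hn1 : n 1 = N)
    (hnrec : ∀ k : ℕ, (N : ℝ) * n (k + 1) = n (k + 2) + n k)
    (hd0 : d 0 = 1) (hd1' : d 1 = Q.trace.re)
    (hdrec : ∀ k : ℕ, Q.trace.re * d (k + 1) = d (k + 2) + d k) :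
    1 < Filter.liminf (fun k : ℕ => (n k * ‖Q‖ ^ k / d k) ^ ((1 : ℝ) / k)) atTop := by
  haveI : Nonempty (Fin N) := ⟨⟨0, by omega⟩⟩
  letI : CStarAlgebra (Matrix (Fin N) (Fin N) ℂ) := Matrix.instCStarAlgebra
  have hH : Q.IsHermitian := hQ.1
  set ev : Fin N → ℝ := hH.eigenvalues with hev
  have hevpos : ∀ i, 0 < ev i := fun i => hQ.eigenvalues_pos i
  have hspec : spectrum ℂ Q = Set.range (fun i => (ev i : ℂ)) := by
    conv_lhs => rw [hH.spectral_theorem, Unitary.conjStarAlgAut_apply, Unitary.spectrum_star_right_conjugate,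
      spectrum_diagonal]
    rfl
  have htr : Q.trace = ∑ i, (ev i : ℂ) := by
    conv_lhs => rw [hH.spectral_theorem, Unitary.conjStarAlgAut_apply]
    rw [Matrix.trace_mul_comm, ← mul_assoc, Matrix.UnitaryGroup.star_mul_self, one_mul,
      Matrix.trace_diagonal]
    rfl
  have htrre : Q.trace.re = ∑ i, ev i := by
    rw [htr, Complex.re_sum]
    simp
  have hub : ∀ j, ev j ≤ ‖Q‖ := by
    intro j
    have hmem : ((ev j : ℂ)) ∈ spectrum ℂ Q := by rw [hspec]; exact ⟨j, rfl⟩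
    have h := spectrum.norm_le_norm_of_mem hmem
    rw [Complex.norm_real, Real.norm_eq_abs] at h
    exact le_trans (le_abs_self _) h
  have hsa : IsSelfAdjoint Q := hH
  obtain ⟨z, hz, hzn⟩ := spectrum.exists_nnnorm_eq_spectralRadius (a := Q)
  rw [hsa.spectralRadius_eq_nnnorm] at hzn
  have hzn' : ‖z‖ = ‖Q‖ := by exact_mod_cast congrArg ENNReal.toReal hzn
  rw [hspec] at hz
  obtain ⟨imax, himax'⟩ := hz
  have himax : ((ev imax : ℝ) : ℂ) = z := himax'
  have hmax : ev imax = ‖Q‖ := by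
    have h : ‖(ev imax : ℂ)‖ = ‖Q‖ := by rw [himax]; exact hzn'
    rwa [Complex.norm_real, Real.norm_eq_abs, abs_of_pos (hevpos imax)] at h
  have hone : ∃ j, ev j ≠ 1 := by
    by_contra hcon
    push_neg at hcon
    apply hQne
    have hdiag : (Matrix.diagonal (RCLike.ofReal ∘ ev) : Matrix (Fin N) (Fin N) ℂ) = 1 := by
      have h2 : (RCLike.ofReal ∘ ev : Fin N → ℂ) = fun _ => 1 := funext fun i => by
        simp [Function.comp, hcon i]
      rw [h2]
      exact Matrix.diagonal_one
    rw [hH.spectral_theorem, hdiag, Unitary.conjStarAlgAut_apply, mul_one]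
    exact Matrix.mem_unitaryGroup_iff.mp (hH.eigenvectorUnitary).2
  have hlam1 : 1 < ‖Q‖ := by
    obtain ⟨j, hj⟩ := hone
    rcases lt_or_gt_of_ne hj with hlt | hgt
    · have hmem : ((ev j : ℂ)) ∈ spectrum ℂ Q := by rw [hspec]; exact ⟨j, rfl⟩
      have hinv := hsym _ hmem
      rw [← Complex.ofReal_inv, hspec] at hinv
      obtain ⟨j', hj'⟩ := hinv
      have hj'2 : ((ev j' : ℝ) : ℂ) = (((ev j)⁻¹ : ℝ) : ℂ) := hj'
      have hj'' : ev j' = (ev j)⁻¹ := by exact_mod_cast hj'2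
      calc (1:ℝ) < (ev j)⁻¹ := (one_lt_inv₀ (hevpos j)).mpr hlt
        _ = ev j' := hj''.symm
        _ ≤ ‖Q‖ := hub j'
    · exact lt_of_lt_of_le hgt (hub j)
  have hlam0 : (0:ℝ) < ‖Q‖ := by linarith
  have hmemQ : ((‖Q‖ : ℝ) : ℂ) ∈ spectrum ℂ Q := by
    rw [hspec]
    exact ⟨imax, by show ((ev imax : ℝ) : ℂ) = _; rw [hmax]⟩
  have hinv := hsym _ hmemQ
  rw [← Complex.ofReal_inv, hspec] at hinv
  obtain ⟨i0, hi0⟩ := hinv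
  have hi02 : ((ev i0 : ℝ) : ℂ) = (((‖Q‖)⁻¹ : ℝ) : ℂ) := hi0
  have hi0' : ev i0 = (‖Q‖)⁻¹ := by exact_mod_cast hi02
  have htrb : Q.trace.re ≤ ((N:ℝ) - 1) * ‖Q‖ + (‖Q‖)⁻¹ := by
    rw [htrre]
    rw [← Finset.sum_erase_add Finset.univ ev (Finset.mem_univ i0)]
    have hcard : (((Finset.univ : Finset (Fin N)).erase i0).card : ℝ) = (N:ℝ) - 1 := by
      rw [Finset.card_erase_of_mem (Finset.mem_univ i0), Finset.card_univ, Fintype.card_fin]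
      have : 1 ≤ N := by omega
      push_cast [Nat.cast_sub this]
      ring
    have hsumle : ∑ j ∈ Finset.univ.erase i0, ev j ≤ ((N:ℝ)-1) * ‖Q‖ := by
      calc ∑ j ∈ Finset.univ.erase i0, ev j
          ≤ ∑ _j ∈ Finset.univ.erase i0, ‖Q‖ := Finset.sum_le_sum (fun j _ => hub j)
        _ = (((Finset.univ : Finset (Fin N)).erase i0).card : ℝ) * ‖Q‖ := by
            rw [Finset.sum_const, nsmul_eq_mul]
        _ = ((N:ℝ)-1) * ‖Q‖ := by rw [hcard]
    rw [hi0']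
    linarith
  -- roots of the characteristic equations
  have hN2 : (2:ℝ) ≤ (N:ℝ) := by exact_mod_cast (by omega : 2 ≤ N)
  obtain ⟨α, hα1, hαeq⟩ := auxRoot hN2
  have hα : 1 < α := by
    rcases lt_or_eq_of_le hα1 with h | h
    · exact h
    · exfalso
      rw [← h] at hαeq
      norm_num at hαeq
      have : (3:ℝ) ≤ (N:ℝ) := by exact_mod_cast hN
      linarith
  obtain ⟨β, hβ1, hβeq⟩ := auxRoot hd1
  have hβ0 : (0:ℝ) < β := by linarith
  have hα0 : (0:ℝ) < α := by linarith
  have hαL : 1 < α * ‖Q‖ := by nlinarith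
  have hkey : β < α * ‖Q‖ := by
    by_contra hcon
    push_neg at hcon
    have h1 : α * ‖Q‖ + 1/(α * ‖Q‖) ≤ β + 1/β := auxMono hαL.le hcon
    rw [hβeq] at h1
    have h2 : ((N:ℝ)-1) * ‖Q‖ + (‖Q‖)⁻¹ < α * ‖Q‖ + 1/(α * ‖Q‖) := by
      have hNeq : (N:ℝ) = α + 1/α := hαeq.symm
      have hia : 1/α < 1 := by rw [div_lt_one hα0]; exact hα
      have e1 : α * (1/α) = 1 := mul_one_div_cancel (ne_of_gt hα0)
      have e2 : 1/(α*‖Q‖) = (1/α) * (1/‖Q‖) := by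
        rw [one_div, one_div, one_div, mul_inv]
      have hil : 1/‖Q‖ < ‖Q‖ := by
        rw [div_lt_iff₀ hlam0]
        nlinarith
      have e3 : (‖Q‖)⁻¹ = 1/‖Q‖ := (one_div _).symm
      rw [hNeq, e2, e3]
      nlinarith [mul_pos (sub_pos.mpr hia) (sub_pos.mpr hil)]
    linarith
  have hnrec' : ∀ k : ℕ, (α + 1/α) * n (k+1) = n (k+2) + n k := by
    intro k
    rw [hαeq]
    exact hnrec k
  have hdrec' : ∀ k : ℕ, (β + 1/β) * d (k+1) = d (k+2) + d k := by
    intro k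
    rw [hβeq]
    exact hdrec k
  have hd1'' : d 1 = β + 1/β := by rw [hd1', ← hβeq]
  have hn1' : α * n 0 ≤ n 1 := by
    rw [hn0, hn1, mul_one, ← hαeq]
    have : 0 < 1/α := by positivity
    linarith
  have hn1'' : n 1 ≤ α * n 0 + α^1 := by
    rw [hn0, hn1, mul_one, pow_one, ← hαeq]
    have : 1/α ≤ 1 := by rw [div_le_one hα0]; linarith
    linarith
  exact auxLiminf α β ‖Q‖ hα hβ1 hlam0 hkey n d hn0 hd0 hd1'' hnrec' hdrec' hn1' hn1''
end

section
/- For $0 < q < 1$, the sequence $d_k := \frac{q^{k+1} - q^{-k-1}}{q - q^{-1}}$ satisfies: for all $k, n \geq 0$ and $0 \leq r \leq \min(k,n)$ with $l = k + n - 2r$, $(1-q^2)^3 \leq \frac{d_k d_n}{d_l d_r^2} \leq (1-q^2)^{-2}$. -/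
/-!
Writing `d_m = (1 - q^(2m+2)) / ((1 - q²) q^m)`, the powers `q^m` cancel in the ratio because
`k + n = l + 2r`, leaving `a b c / (e f²)` with `c = 1 - q²` and `a, b, e, f` of the form
`1 - q^(2m+2)`, all of which lie in `[c, 1]`.
-/

open Set

lemma zpow_sub_zpow_neg_div_eq {K : Type*} [Field K] {q : K} (hq : q ≠ 0) (m : ℕ) :
    (q ^ ((m : ℤ) + 1) - q ^ (-((m : ℤ) + 1))) / (q - q⁻¹) =
      (1 - q ^ (2 * m + 2)) / ((1 - q ^ 2) * q ^ m) := by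
  have hpow : q ^ ((m : ℤ) + 1) = q ^ (m + 1) := by norm_cast
  have hinv : q - q⁻¹ = -(1 - q ^ 2) / q := by field_simp; ring
  rw [zpow_neg, hpow, hinv]
  by_cases hq2 : 1 - q ^ 2 = 0
  · simp [hq2]
  · rw [div_eq_div_iff (div_ne_zero (neg_ne_zero.mpr hq2) hq) (mul_ne_zero hq2 (pow_ne_zero _ hq))]
    field_simp
    ring

lemma ratio_eq_of_eq_div_mul_pow {K : Type*} [Field K] {q c : K} (hq : q ≠ 0) (hc : c ≠ 0)
    {d u : ℕ → K} (hd : ∀ m, d m = u m / (c * q ^ m)) {k n l r : ℕ} (h : l + 2 * r = k + n) :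
    d k * d n / (d l * d r ^ 2) = u k * u n * c / (u l * u r ^ 2) := by
  have hpow : q ^ k * q ^ n = q ^ l * (q ^ r) ^ 2 := by
    rw [← pow_add, ← pow_mul, ← pow_add, ← h, mul_comm r]
  calc d k * d n / (d l * d r ^ 2)
      = u k * u n * c * (c ^ 2 * (q ^ l * (q ^ r) ^ 2)) /
          (u l * u r ^ 2 * (c ^ 2 * (q ^ k * q ^ n))) := by
        simp only [hd, div_pow, mul_pow]
        field_simp
    _ = u k * u n * c / (u l * u r ^ 2) := by
        rw [hpow, mul_div_mul_right _ _ (by positivity)]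

lemma one_sub_sq_le_one_sub_pow {q : ℝ} (hq0 : 0 ≤ q) (hq1 : q ≤ 1) (m : ℕ) :
    1 - q ^ 2 ≤ 1 - q ^ (2 * m + 2) := by
  have := pow_le_pow_of_le_one hq0 hq1 (show 2 ≤ 2 * m + 2 by omega)
  linarith

lemma ratio_bounds_of_mem_Icc {a b c e f : ℝ} (hc : 0 < c) (ha : a ∈ Icc c 1) (hb : b ∈ Icc c 1)
    (he : e ∈ Icc c 1) (hf : f ∈ Icc c 1) :
    c ^ 3 ≤ a * b * c / (e * f ^ 2) ∧ a * b * c / (e * f ^ 2) ≤ (c ^ 2)⁻¹ := by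
  obtain ⟨ha₀, ha₁⟩ := ha
  obtain ⟨hb₀, hb₁⟩ := hb
  obtain ⟨he₀, he₁⟩ := he
  obtain ⟨hf₀, hf₁⟩ := hf
  have ha_pos := hc.trans_le ha₀
  have hb_pos := hc.trans_le hb₀
  have he_pos := hc.trans_le he₀
  have hf_pos := hc.trans_le hf₀
  have hden : 0 < e * f ^ 2 := by positivity
  constructor
  · rw [le_div_iff₀ hden]
    calc c ^ 3 * (e * f ^ 2) ≤ c ^ 3 * (1 * 1 ^ 2) := by gcongr
      _ = c * c * c := by ring
      _ ≤ a * b * c := by gcongr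
  · rw [div_le_iff₀ hden]
    calc a * b * c ≤ 1 * 1 * c := by gcongr
      _ = (c ^ 2)⁻¹ * (c * c ^ 2) := by field_simp
      _ ≤ (c ^ 2)⁻¹ * (e * f ^ 2) := by gcongr

theorem stmt6_general (q : ℝ) (hq0 : 0 < q) (hq1 : q < 1)
    (d : ℕ → ℝ)
    (hd : ∀ k : ℕ, d k = (q ^ ((k : ℤ) + 1) - q ^ (-((k : ℤ) + 1))) / (q - q⁻¹))
    (k n r l : ℕ) (hl : l + 2 * r = k + n) :
    (1 - q ^ 2) ^ 3 ≤ d k * d n / (d l * d r ^ 2) ∧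
      d k * d n / (d l * d r ^ 2) ≤ ((1 - q ^ 2) ^ 2)⁻¹ := by
  have hc : 0 < 1 - q ^ 2 := by nlinarith
  have hd_eq : ∀ m, d m = (1 - q ^ (2 * m + 2)) / ((1 - q ^ 2) * q ^ m) := fun m =>
    (hd m).trans (zpow_sub_zpow_neg_div_eq hq0.ne' m)
  have hmem : ∀ m : ℕ, 1 - q ^ (2 * m + 2) ∈ Icc (1 - q ^ 2) 1 := fun m =>
    ⟨one_sub_sq_le_one_sub_pow hq0.le hq1.le m, by linarith [pow_pos hq0 (2 * m + 2)]⟩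
  rw [ratio_eq_of_eq_div_mul_pow hq0.ne' hc.ne' hd_eq hl]
  exact ratio_bounds_of_mem_Icc hc (hmem k) (hmem n) (hmem l) (hmem r)

/-- For `0 < q < 1` and `d_k = (q^{k+1} - q^{-(k+1)})/(q - q⁻¹)`:
for all `k, n ≥ 0`, `r ≤ min k n`, `l = k + n - 2r`,
`(1-q²)³ ≤ d_k d_n / (d_l d_r²) ≤ (1-q²)⁻²`. -/
theorem stmt6 (q : ℝ) (hq0 : 0 < q) (hq1 : q < 1)
    (d : ℕ → ℝ)
    (hd : ∀ k : ℕ, d k = (q ^ ((k : ℤ) + 1) - q ^ (-((k : ℤ) + 1))) / (q - q⁻¹))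
    (k n r l : ℕ) (hr : r ≤ min k n) (hl : l + 2 * r = k + n) :
    (1 - q ^ 2) ^ 3 ≤ d k * d n / (d l * d r ^ 2) ∧
      d k * d n / (d l * d r ^ 2) ≤ ((1 - q ^ 2) ^ 2)⁻¹ :=
  stmt6_general q hq0 hq1 d hd k n r l hl
end

section
/- Let $p \geq 2$, $s \in (0,1]$, and suppose $\int_{-2}^2 (1 + a s x)^p \frac{\sqrt{4-x^2}}{2\pi}\,dx \leq (1+a^2)^{p/2}$ for all sufficiently small $a > 0$. Then $p(p-1)s^2 \leq p$, i.e. $s \leq (p-1)^{-1/2}$. -/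
/-!
Expand both sides to second order in `a`. On `[-δ, δ]` the second derivative of `(1 + u)^p` is at
least `p(p-1)(1-δ)^(p-2)`, so `(1 + u)^p` dominates the corresponding quadratic Taylor polynomial;
integrating it against the semicircle law, whose mean is `0` and variance is `1`, bounds the
left side below by `1 + p(p-1)(1-2as)^(p-2) s² a² / 2`. The right side is `1 + p a² / 2 + o(a²)`.
Dividing by `a²` and letting `a → 0⁺` gives `p(p-1)s² ≤ p`.
-/

open Real Set Filter Topology intervalIntegral

theorem one_add_mul_add_sq_le_rpow {p δ u : ℝ} (hp : 2 ≤ p) (hδ0 : 0 < δ) (hδ1 : δ < 1)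
    (hu : |u| ≤ δ) :
    1 + p * u + p * (p - 1) * (1 - δ) ^ (p - 2) / 2 * u ^ 2 ≤ (1 + u) ^ p := by
  set c := p * (p - 1) * (1 - δ) ^ (p - 2)
  set f : ℝ → ℝ := fun x ↦ (1 + x) ^ p - p * x - c / 2 * x ^ 2
  set f' : ℝ → ℝ := fun x ↦ p * (1 + x) ^ (p - 1) - p - c * x
  have hf' : ∀ x, -1 < x → HasDerivAt f (f' x) x := by
    intro x hx
    have := ((((hasDerivAt_id' x).const_add 1).rpow_const (p := p) (Or.inl (by linarith))).sub
      ((hasDerivAt_id' x).const_mul p)).sub ((hasDerivAt_pow 2 x).const_mul (c / 2))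
    exact this.congr_deriv (by simp only [f']; push_cast; ring)
  have hf'' : ∀ x, -1 < x → HasDerivAt f' (p * (p - 1) * (1 + x) ^ (p - 2) - c) x := by
    intro x hx
    have := (((((hasDerivAt_id' x).const_add 1).rpow_const (p := p - 1)
      (Or.inl (by linarith))).const_mul p).sub_const p).sub ((hasDerivAt_id' x).const_mul c)
    exact this.congr_deriv (by rw [show p - 1 - 1 = p - 2 by ring]; ring)
  have hconv : ConvexOn ℝ (Icc (-δ) δ) f := by
    have hδ : ∀ x ∈ Icc (-δ) δ, -1 < x := fun x hx ↦ by linarith [hx.1]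
    refine convexOn_of_hasDerivWithinAt2_nonneg (f' := f')
      (f'' := fun x ↦ p * (p - 1) * (1 + x) ^ (p - 2) - c) (convex_Icc _ _)
      (fun x hx ↦ (hf' x (hδ x hx)).continuousAt.continuousWithinAt)
      (fun x hx ↦ (hf' x (hδ x (interior_subset hx))).hasDerivWithinAt)
      (fun x hx ↦ (hf'' x (hδ x (interior_subset hx))).hasDerivWithinAt) fun x hx ↦ ?_
    rw [interior_Icc] at hx
    have : (1 - δ) ^ (p - 2) ≤ (1 + x) ^ (p - 2) :=
      rpow_le_rpow (by linarith) (by linarith [hx.1]) (by linarith)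
    have : 0 ≤ p * (p - 1) := by nlinarith
    simp only [c, sub_nonneg]
    gcongr
  have hmin : IsMinOn f (Icc (-δ) δ) 0 := by
    refine hconv.isMinOn_of_rightDeriv_eq_zero (by simp [hδ0]) ?_
    rw [((hf' 0 (by norm_num)).hasDerivWithinAt).derivWithin (uniqueDiffWithinAt_Ioi 0)]
    simp [f']
  have := hmin (abs_le.mp hu)
  norm_num [f] at this
  linarith

theorem integral_sqrt_four_sub_sq : ∫ x in (-2 : ℝ)..2, √(4 - x ^ 2) = 2 * π := by
  have h : ∀ x : ℝ, √(4 - x ^ 2) = 2 * √(1 - (x / 2) ^ 2) := fun x ↦ by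
    rw [show 4 - x ^ 2 = 2 ^ 2 * (1 - (x / 2) ^ 2) by ring, sqrt_mul (by norm_num),
      sqrt_sq (by norm_num)]
  simp only [h, integral_const_mul, integral_comp_div (fun x ↦ √(1 - x ^ 2)) two_ne_zero]
  norm_num [integral_sqrt_one_sub_sq]
  ring

theorem hasDerivAt_four_sub_sq_mul_sqrt {x : ℝ} (hx : x ∈ Ioo (-2) 2) :
    HasDerivAt (fun y ↦ (4 - y ^ 2) * √(4 - y ^ 2)) (-3 * x * √(4 - x ^ 2)) x := by
  have hpos : 0 < 4 - x ^ 2 := by nlinarith [hx.1, hx.2]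
  have hsq : HasDerivAt (fun y : ℝ ↦ 4 - y ^ 2) (-(2 * x)) x := by
    simpa using (hasDerivAt_pow 2 x).const_sub 4
  refine (hsq.mul (hsq.sqrt hpos.ne')).congr_deriv ?_
  have hne : √(4 - x ^ 2) ≠ 0 := (sqrt_pos.mpr hpos).ne'
  field_simp
  linear_combination x * sq_sqrt hpos.le

theorem integral_mul_sqrt_four_sub_sq : ∫ x in (-2 : ℝ)..2, x * √(4 - x ^ 2) = 0 := by
  have := integral_eq_sub_of_hasDerivAt_of_le (by norm_num)
    (by fun_prop) (fun x hx ↦ hasDerivAt_four_sub_sq_mul_sqrt hx)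
    (by apply Continuous.intervalIntegrable; fun_prop)
  simp only [integral_const_mul, mul_assoc] at this
  norm_num at this
  linarith

theorem integral_sq_mul_sqrt_four_sub_sq :
    ∫ x in (-2 : ℝ)..2, x ^ 2 * √(4 - x ^ 2) = 2 * π := by
  have hderiv : ∀ x ∈ Ioo (-2 : ℝ) 2, HasDerivAt (fun y ↦ y * ((4 - y ^ 2) * √(4 - y ^ 2)))
      (4 * √(4 - x ^ 2) - 4 * (x ^ 2 * √(4 - x ^ 2))) x := fun x hx ↦
    ((hasDerivAt_id' x).mul (hasDerivAt_four_sub_sq_mul_sqrt hx)).congr_deriv (by ring)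
  have := integral_eq_sub_of_hasDerivAt_of_le (by norm_num)
    (by fun_prop) hderiv (by apply Continuous.intervalIntegrable; fun_prop)
  rw [integral_sub (by apply Continuous.intervalIntegrable; fun_prop)
    (by apply Continuous.intervalIntegrable; fun_prop), integral_const_mul, integral_const_mul,
    integral_sqrt_four_sub_sq] at this
  norm_num at this
  linarith

noncomputable def semicircleDensity (x : ℝ) : ℝ := √(4 - x ^ 2) / (2 * π)

theorem integral_quadratic_mul_semicircleDensity (α β γ : ℝ) :
    ∫ x in (-2 : ℝ)..2, (α + β * x + γ * x ^ 2) * semicircleDensity x = α + γ := by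
  have hint : ∀ g : ℝ → ℝ, Continuous g → IntervalIntegrable g MeasureTheory.volume (-2) 2 :=
    fun g hg ↦ hg.intervalIntegrable _ _
  simp only [semicircleDensity, mul_div_assoc', integral_div, add_mul, mul_assoc]
  rw [integral_add (hint _ (by fun_prop)) (hint _ (by fun_prop)),
    integral_add (hint _ (by fun_prop)) (hint _ (by fun_prop)),
    integral_const_mul, integral_const_mul, integral_const_mul, integral_sqrt_four_sub_sq,
    integral_mul_sqrt_four_sub_sq, integral_sq_mul_sqrt_four_sub_sq]
  field_simp
  ring

theorem one_add_mul_sq_le_integral_rpow_mul_semicircleDensity {p b : ℝ} (hp : 2 ≤ p)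
    (hb0 : 0 < b) (hb1 : 2 * b < 1) :
    1 + p * (p - 1) * (1 - 2 * b) ^ (p - 2) / 2 * b ^ 2 ≤
      ∫ x in (-2 : ℝ)..2, (1 + b * x) ^ p * semicircleDensity x := by
  have hbx : ∀ x ∈ Icc (-2 : ℝ) 2, |b * x| ≤ 2 * b := fun x hx ↦ by
    rw [abs_mul, abs_of_pos hb0, mul_comm 2]
    exact mul_le_mul_of_nonneg_left (abs_le.mpr hx) hb0.le
  rw [← integral_quadratic_mul_semicircleDensity 1 (p * b)]
  refine integral_mono_on (by norm_num) ?_ ?_ fun x hx ↦ ?_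
  · exact (by unfold semicircleDensity; fun_prop : Continuous _).intervalIntegrable _ _
  · refine ContinuousOn.intervalIntegrable fun x hx ↦ ?_
    rw [uIcc_of_le (by norm_num)] at hx
    have : 0 < 1 + b * x := by linarith [(abs_le.mp (hbx x hx)).1]
    exact ((by fun_prop : Continuous fun x ↦ 1 + b * x).continuousAt.rpow_const
      (Or.inl this.ne')).continuousWithinAt.mul
      (by unfold semicircleDensity; fun_prop : Continuous _).continuousWithinAt
  · have hρ : 0 ≤ semicircleDensity x := by unfold semicircleDensity; positivity
    have := one_add_mul_add_sq_le_rpow hp (by positivity) hb1 (hbx x hx)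
    calc _ = (1 + p * (b * x) + p * (p - 1) * (1 - 2 * b) ^ (p - 2) / 2 * (b * x) ^ 2) *
          semicircleDensity x := by ring
      _ ≤ _ := mul_le_mul_of_nonneg_right this hρ

theorem tendsto_one_add_sq_rpow_sub_one_div_sq (r : ℝ) :
    Tendsto (fun a : ℝ ↦ ((1 + a ^ 2) ^ r - 1) / a ^ 2) (𝓝[>] 0) (𝓝 r) := by
  have hderiv : HasDerivAt (fun t : ℝ ↦ (1 + t) ^ r) r 0 := by
    simpa using ((hasDerivAt_id' (0 : ℝ)).const_add 1).rpow_const (p := r) (by norm_num)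
  have hsq : Tendsto (fun a : ℝ ↦ a ^ 2) (𝓝[>] 0) (𝓝[>] 0) :=
    tendsto_nhdsWithin_of_tendsto_nhds_of_eventually_within _
      (((continuous_pow 2).tendsto' 0 0 (by norm_num)).mono_left nhdsWithin_le_nhds)
      (eventually_nhdsWithin_of_forall fun a (ha : 0 < a) ↦ pow_pos ha 2)
  convert hderiv.tendsto_slope_zero_right.comp hsq using 2 with a
  simp [div_eq_inv_mul]

theorem le_rpow_neg_half_of_mul_sq_le_one {c s : ℝ} (hc : 0 < c) (h : c * s ^ 2 ≤ 1) :
    s ≤ c ^ (-(1 : ℝ) / 2) :=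
  calc s ≤ |s| := le_abs_self s
    _ = √(s ^ 2) := (sqrt_sq_eq_abs s).symm
    _ ≤ √(c⁻¹) := sqrt_le_sqrt (by rw [← one_div, le_div_iff₀ hc]; linarith)
    _ = c ^ (-(1 : ℝ) / 2) := by rw [sqrt_eq_rpow, inv_rpow hc.le, ← rpow_neg hc.le]; norm_num

theorem stmt16_general (p s : ℝ) (hp : 2 ≤ p) (hs0 : 0 < s)
    (h : ∃ ε > 0, ∀ a : ℝ, 0 < a → a < ε →
      (∫ x in (-2 : ℝ)..2, (1 + a * s * x) ^ p * (Real.sqrt (4 - x ^ 2) / (2 * Real.pi)))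
        ≤ (1 + a ^ 2) ^ (p / 2)) :
    p * (p - 1) * s ^ 2 ≤ p ∧ s ≤ (p - 1) ^ (-(1 : ℝ) / 2) := by
  obtain ⟨ε, hε, hle⟩ := h
  set coef : ℝ → ℝ := fun a ↦ p * (p - 1) * (1 - 2 * (a * s)) ^ (p - 2) / 2 * s ^ 2
  have hcoef : Tendsto coef (𝓝[>] 0) (𝓝 (p * (p - 1) / 2 * s ^ 2)) := by
    have : Continuous fun t : ℝ ↦ t ^ (p - 2) := continuous_rpow_const (by linarith)
    have : Continuous coef := by fun_prop
    simpa [coef] using this.continuousWithinAt.tendsto (x := 0) (s := Ioi 0)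
  have hbound : ∀ᶠ a in 𝓝[>] 0, coef a ≤ ((1 + a ^ 2) ^ (p / 2) - 1) / a ^ 2 := by
    filter_upwards [Ioo_mem_nhdsGT (lt_min hε (by positivity : 0 < 1 / (2 * s)))]
      with a ⟨ha0, ha⟩
    have hb1 : 2 * (a * s) < 1 := by
      have := (lt_div_iff₀ (by positivity)).mp (ha.trans_le (min_le_right _ _))
      linarith
    have hlower := one_add_mul_sq_le_integral_rpow_mul_semicircleDensity hp (mul_pos ha0 hs0) hb1
    have hupper := hle a ha0 (ha.trans_le (min_le_left _ _))
    rw [le_div_iff₀ (by positivity)]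
    calc coef a * a ^ 2 = p * (p - 1) * (1 - 2 * (a * s)) ^ (p - 2) / 2 * (a * s) ^ 2 := by ring
      _ ≤ _ := by linarith [hlower.trans hupper]
  have hlimit : p * (p - 1) / 2 * s ^ 2 ≤ p / 2 :=
    le_of_tendsto_of_tendsto hcoef (tendsto_one_add_sq_rpow_sub_one_div_sq _) hbound
  refine ⟨by linarith, le_rpow_neg_half_of_mul_sq_le_one (by linarith) ?_⟩
  nlinarith

/-- If `p ≥ 2`, `s ∈ (0,1]` and `∫ (1+asx)^p dμ(x) ≤ (1+a²)^{p/2}` for all sufficiently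
small `a > 0` (μ the semicircle distribution), then `p(p-1)s² ≤ p`, i.e. `s ≤ (p-1)^{-1/2}`. -/
theorem stmt16 (p s : ℝ) (hp : 2 ≤ p) (hs0 : 0 < s) (hs1 : s ≤ 1)
    (h : ∃ ε > 0, ∀ a : ℝ, 0 < a → a < ε →
      (∫ x in (-2 : ℝ)..2, (1 + a * s * x) ^ p * (Real.sqrt (4 - x ^ 2) / (2 * Real.pi)))
        ≤ (1 + a ^ 2) ^ (p / 2)) :
    p * (p - 1) * s ^ 2 ≤ p ∧ s ≤ (p - 1) ^ (-(1 : ℝ) / 2) :=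
  stmt16_general p s hp hs0 h
end

section
/- Let $p \geq 4$, $c_p = 1 + \frac{4}{\log(p-1)}$. Then $\phi(c_p) := \sum_{k=1}^\infty (p-1)^{1 - c_p k}(1+k)^{2 - 6/p} \leq 1$. -/
/-!
Write `q = p - 1 ≥ 3`. The choice of `c_p` makes `q ^ (-c_p) = e⁻⁴ / q`, so the `k`-th term is
`q · (e⁻⁴ / q) ^ (k+1) · (k+2) ^ (2 - 6/p)`. Since `0 ≤ 2 - 6/p ≤ 2` and `k + 2 ≤ 2 ^ (k+1)`, the
polynomial factor is at most `4 ^ (k+1)`, so the series is dominated by the geometric series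
`q · ∑ r ^ (k+1)` with `r = 4 e⁻⁴ / q ≤ 4 e⁻⁴ / 3`, whose sum `4 e⁻⁴ / (1 - r)` is below `1`
as soon as `e⁴ ≥ 13`.
-/

open Real

lemma rpow_neg_one_add_div_log {q : ℝ} (hq : 0 < q) (hlog : log q ≠ 0) (a : ℝ) :
    q ^ (-(1 + a / log q)) = exp (-a) / q := by
  have hexp : log q * -(1 + a / log q) = -a + -log q := by field_simp; ring
  rw [rpow_def_of_pos hq, hexp, exp_add, exp_neg (log q), exp_log hq, div_eq_mul_inv]

lemma rpow_one_sub_mul_natCast {q : ℝ} (hq : 0 < q) (c : ℝ) (n : ℕ) :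
    q ^ (1 - c * n) = q * (q ^ (-c)) ^ n := by
  rw [sub_eq_add_neg, ← neg_mul, rpow_add hq, rpow_one, rpow_mul hq.le, rpow_natCast]

lemma natCast_add_one_rpow_le_four_pow {e : ℝ} (he0 : 0 ≤ e) (he2 : e ≤ 2) (n : ℕ) :
    ((n : ℝ) + 1) ^ e ≤ 4 ^ n := by
  have hbase : (n : ℝ) + 1 ≤ 2 ^ n := by exact_mod_cast Nat.lt_two_pow_self
  calc ((n : ℝ) + 1) ^ e ≤ ((2 : ℝ) ^ n) ^ e := by gcongr
    _ ≤ ((2 : ℝ) ^ n) ^ (2 : ℝ) := rpow_le_rpow_of_exponent_le (one_le_pow₀ one_le_two) he2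
    _ = 4 ^ n := by rw [rpow_two, ← pow_mul, mul_comm, pow_mul]; norm_num

lemma tsum_le_of_le_mul_geometric {f : ℕ → ℝ} {C r : ℝ} (hf : ∀ k, 0 ≤ f k) (hr0 : 0 ≤ r)
    (hr1 : r < 1) (hle : ∀ k, f k ≤ C * r ^ (k + 1)) :
    ∑' k, f k ≤ C * r / (1 - r) := by
  have hgeom : HasSum (fun k : ℕ => C * r ^ (k + 1)) (C * r / (1 - r)) := by
    have := (hasSum_geometric_of_lt_one hr0 hr1).mul_left (C * r)
    simpa only [pow_succ', mul_assoc, div_eq_mul_inv] using this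
  exact hgeom.tsum_eq ▸ (hgeom.summable.of_nonneg_of_le hf hle).tsum_le_tsum hle hgeom.summable

lemma exp_neg_four_le : exp (-4) ≤ 1 / 13 := by
  have h13 : (13 : ℝ) ≤ exp 4 := by nlinarith [quadratic_le_exp_of_nonneg (x := 4) (by norm_num)]
  rw [exp_neg, inv_eq_one_div]
  exact one_div_le_one_div_of_le (by norm_num) h13

/-- For `p ≥ 4` and `c_p = 1 + 4/log(p-1)`:
`∑_{k≥1} (p-1)^{1 - c_p k} (1+k)^{2-6/p} ≤ 1`. -/
theorem stmt17 (p : ℝ) (hp : 4 ≤ p) :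
    ∑' k : ℕ, (p - 1) ^ (1 - (1 + 4 / Real.log (p - 1)) * ((k : ℝ) + 1)) *
        (1 + ((k : ℝ) + 1)) ^ (2 - 6 / p) ≤ 1 := by
  set q := p - 1
  have hq : 3 ≤ q := by linarith
  have hlog : log q ≠ 0 := (log_pos (by linarith)).ne'
  have he0 : 0 ≤ 2 - 6 / p := by
    rw [sub_nonneg, div_le_iff₀ (by linarith)]; linarith
  have he2 : 2 - 6 / p ≤ 2 := by
    have : 0 ≤ 6 / p := div_nonneg (by norm_num) (by linarith)
    linarith
  set r := 4 * exp (-4) / q with hr_def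
  have hterm : ∀ k : ℕ, q ^ (1 - (1 + 4 / log q) * ((k : ℝ) + 1)) *
      (1 + ((k : ℝ) + 1)) ^ (2 - 6 / p) ≤ q * r ^ (k + 1) := by
    intro k
    calc _ = q * (exp (-4) / q) ^ (k + 1) * (((k + 1 : ℕ) : ℝ) + 1) ^ (2 - 6 / p) := by
          rw [← Nat.cast_add_one, rpow_one_sub_mul_natCast (by linarith),
            rpow_neg_one_add_div_log (by linarith) hlog, add_comm 1]
      _ ≤ q * (exp (-4) / q) ^ (k + 1) * 4 ^ (k + 1) := by
          gcongr; exact natCast_add_one_rpow_le_four_pow he0 he2 _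
      _ = q * r ^ (k + 1) := by rw [hr_def, mul_div_assoc, mul_pow]; ring
  have hexp := exp_neg_four_le
  have hr1 : r ≤ 4 / 39 := by rw [hr_def, div_le_iff₀ (by linarith)]; nlinarith
  calc _ ≤ q * r / (1 - r) :=
        tsum_le_of_le_mul_geometric (fun k => by positivity) (by positivity) (by linarith) hterm
    _ ≤ 1 := by
      rw [div_le_one (by linarith), hr_def, mul_div_cancel₀ _ (by linarith)]
      linarith
end
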